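/- If n is an odd prime and k is a positive integer, then there exists a bijection between N_{n,k} (the set of rotation-classes of (n,k)-codes, i.e., binary necklaces with n black beads and k white beads) and F_{n,k,0} (the set of (n,k)-codes with weighted sum 0 in ZMod n). -/

import Mathlib

open Finset

/-- An `(n,k)`-code: `f : ZMod n → ℕ` with total sum `k`. -/
def IsCode (n : ℕ) [NeZero n] (k : ℕ) (f : ZMod n → ℕ) : Prop :=
  ∑ i : ZMod n, f i = k

/-- The weighted sum `W(f) = ∑ i · f(i)` in `ZMod n`. -/
def wsum (n : ℕ) [NeZero n] (f : ZMod n → ℕ) : ZMod n :=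
  ∑ i : ZMod n, i * (f i : ZMod n)

/-- The rotation `c`, defined by `(c f) i = f (i+1)`. -/
def rot (n : ℕ) [NeZero n] (f : ZMod n → ℕ) : ZMod n → ℕ := fun i => f (i + 1)

/-- A code is aperiodic (has period `n`) if `c^j f = f` implies `n ∣ j`. -/
def Aperiodic (n : ℕ) [NeZero n] (f : ZMod n → ℕ) : Prop :=
  ∀ j : ℕ, (rot n)^[j] f = f → n ∣ j

/-- The rotation class (orbit under `c`) of a code. -/
def rotOrbit (n : ℕ) [NeZero n] (f : ZMod n → ℕ) : Set (ZMod n → ℕ) :=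
  {g | ∃ j : ℕ, (rot n)^[j] f = g}


/-- The set `N_{n,k}` of binary necklaces with `n` black and `k` white beads,
realized as rotation-classes of `(n,k)`-codes. -/
def necklaces (n k : ℕ) [NeZero n] : Set (Set (ZMod n → ℕ)) :=
  {S | ∃ f : ZMod n → ℕ, IsCode n k f ∧ S = rotOrbit n f}

/-! Both `N_{n,k}` and `F_{n,k,0}` have `(T + (n - 1) [n ∣ k]) / n` elements, where `T` is the
number of `(n,k)`-codes. For necklaces this is Burnside's lemma: since `n` is prime, a nontrivial
rotation fixes only constant codes, and a constant code of total `k` exists iff `n ∣ k`.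
For `F_{n,k,0}`, orthogonality of a primitive additive character `ψ` of `ZMod n` gives
`n · #F_{n,k,0} = ∑_t ∑_f ψ (t · W f)`. For `t ≠ 0` the inner sum is the coefficient of `X^k` in
`∏_j (1 - ψ (t j) X)⁻¹ = (1 - X^n)⁻¹`, because the `ψ (t j)` run over all `n`-th roots of unity. -/

section Rotation

variable {n : ℕ}

def rotate (t : ZMod n) (f : ZMod n → ℕ) : ZMod n → ℕ := fun i => f (i + t)

theorem rotate_zero (f : ZMod n → ℕ) : rotate 0 f = f := by
  funext i
  simp [rotate]

theorem rotate_add (s t : ZMod n) (f : ZMod n → ℕ) :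
    rotate (s + t) f = rotate s (rotate t f) := by
  funext i
  simp [rotate, add_assoc]

variable [NeZero n]

theorem rot_iterate (j : ℕ) (f : ZMod n → ℕ) : (rot n)^[j] f = rotate j f := by
  induction j with
  | zero => simp [rotate_zero]
  | succ j ih =>
    rw [Function.iterate_succ_apply', ih, Nat.cast_succ, add_comm, rotate_add]
    rfl

theorem mem_rotOrbit_iff {f g : ZMod n → ℕ} :
    g ∈ rotOrbit n f ↔ ∃ t : ZMod n, rotate t f = g := by
  simp only [rotOrbit, Set.mem_ofPred_eq, rot_iterate]
  exact ⟨fun ⟨j, h⟩ => ⟨j, h⟩, fun ⟨t, h⟩ => ⟨t.val, by rwa [ZMod.natCast_zmod_val]⟩⟩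

theorem rotOrbit_rotate (t : ZMod n) (f : ZMod n → ℕ) :
    rotOrbit n (rotate t f) = rotOrbit n f := by
  ext g
  simp only [mem_rotOrbit_iff, ← rotate_add]
  exact ⟨fun ⟨s, h⟩ => ⟨s + t, h⟩, fun ⟨s, h⟩ => ⟨s - t, by rwa [sub_add_cancel]⟩⟩

theorem rotOrbit_eq_rotOrbit_iff {f g : ZMod n → ℕ} :
    rotOrbit n f = rotOrbit n g ↔ ∃ t : ZMod n, rotate t g = f := by
  refine ⟨fun h => mem_rotOrbit_iff.1 (h ▸ mem_rotOrbit_iff.2 ⟨0, rotate_zero f⟩), ?_⟩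
  rintro ⟨t, rfl⟩
  exact rotOrbit_rotate t g

theorem isCode_rotate {k : ℕ} (t : ZMod n) {f : ZMod n → ℕ} (hf : IsCode n k f) :
    IsCode n k (rotate t f) :=
  (Fintype.sum_equiv (Equiv.addRight t) _ _ fun _ => rfl).trans hf

theorem apply_eq_apply_zero_of_rotate_eq_self (hn : n.Prime) {t : ZMod n} (ht : t ≠ 0)
    {f : ZMod n → ℕ} (hf : rotate t f = f) (i : ZMod n) : f i = f 0 := by
  have : Fact n.Prime := ⟨hn⟩
  have hmul (m : ℕ) : f (m * t) = f 0 := by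
    induction m with
    | zero => simp
    | succ m ih =>
      rw [Nat.cast_succ, add_one_mul, ← ih]
      exact congrFun hf _
  simpa [ht] using hmul (i * t⁻¹).val

instance (k : ℕ) : AddAction (ZMod n) {f : ZMod n → ℕ // IsCode n k f} where
  vadd t f := ⟨rotate t f.1, isCode_rotate t f.2⟩
  zero_vadd f := Subtype.ext (rotate_zero f.1)
  add_vadd s t f := Subtype.ext (rotate_add s t f.1)

theorem isCode_const_iff {k m : ℕ} : IsCode n k (fun _ => m) ↔ n * m = k := by
  simp [IsCode, ZMod.card]

theorem card_fixedBy_code (hn : n.Prime) (k : ℕ) {t : ZMod n} (ht : t ≠ 0) :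
    Nat.card (AddAction.fixedBy {f : ZMod n → ℕ // IsCode n k f} t) =
      if n ∣ k then 1 else 0 := by
  have hconst (f : AddAction.fixedBy {f : ZMod n → ℕ // IsCode n k f} t) :
      f.1.1 = fun _ => f.1.1 0 :=
    funext (apply_eq_apply_zero_of_rotate_eq_self hn ht (congrArg Subtype.val f.2))
  split_ifs with hk
  · obtain ⟨m, rfl⟩ := hk
    refine Nat.card_eq_one_iff_exists.2
      ⟨⟨⟨fun _ => m, isCode_const_iff.2 rfl⟩, rfl⟩, fun f => ?_⟩
    have h := f.1.2
    rw [hconst f, isCode_const_iff, mul_right_inj' (NeZero.ne n)] at h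
    exact Subtype.ext (Subtype.ext ((hconst f).trans (by rw [h])))
  · have : IsEmpty (AddAction.fixedBy {f : ZMod n → ℕ // IsCode n k f} t) := ⟨fun f => by
      have h := f.1.2
      rw [hconst f, isCode_const_iff] at h
      exact hk ⟨_, h.symm⟩⟩
    exact Nat.card_of_isEmpty

end Rotation

variable {n : ℕ} [NeZero n]

/-- The `(n,k)`-codes, enumerated through `finsuppAntidiag` so that `PowerSeries.coeff_prod`
applies to them. -/
def codes (n k : ℕ) [NeZero n] : Finset (ZMod n → ℕ) :=
  (finsuppAntidiag univ k).map ⟨DFunLike.coe, DFunLike.coe_injective⟩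

theorem mem_codes {k : ℕ} {f : ZMod n → ℕ} : f ∈ codes n k ↔ IsCode n k f := by
  simp only [codes, mem_map]
  constructor
  · rintro ⟨l, hl, rfl⟩
    exact (mem_finsuppAntidiag.1 hl).1
  · intro hf
    exact ⟨Finsupp.equivFunOnFinite.symm f, by simpa [IsCode] using hf, rfl⟩

instance (k : ℕ) : Finite {f : ZMod n → ℕ // IsCode n k f} :=
  .of_equiv _ (Equiv.subtypeEquivRight fun _ => mem_codes)

instance (k : ℕ) : Finite {f : ZMod n → ℕ // IsCode n k f ∧ wsum n f = 0} :=
  .of_injective (fun f => (⟨f.1, f.2.1⟩ : {f : ZMod n → ℕ // IsCode n k f}))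
    fun _ _ h => Subtype.ext (Subtype.mk.inj h)

theorem card_code (k : ℕ) : Nat.card {f : ZMod n → ℕ // IsCode n k f} = #(codes n k) := by
  rw [← Nat.card_eq_finsetCard]
  exact Nat.card_congr (Equiv.subtypeEquivRight fun _ => mem_codes.symm)

theorem Fintype.sum_eq_apply_add_card_sub_one_nsmul {α M : Type*} [Fintype α]
    [AddCommMonoid M] {g : α → M} {c : M} (a : α) (hg : ∀ t ≠ a, g t = c) :
    ∑ t, g t = g a + (Fintype.card α - 1) • c := by
  classical
  rw [← add_sum_erase _ _ (mem_univ a), sum_eq_card_nsmul fun t ht => hg t (ne_of_mem_erase ht),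
    card_erase_of_mem (mem_univ a), card_univ]

noncomputable def necklacesEquivQuotient (k : ℕ) :
    necklaces n k ≃ AddAction.orbitRel.Quotient (ZMod n) {f : ZMod n → ℕ // IsCode n k f} :=
  .symm <| .ofBijective
    (Quotient.lift (fun f => ⟨rotOrbit n f.1, f.1, f.2, rfl⟩) fun _ g ⟨t, h⟩ =>
      Subtype.ext (rotOrbit_eq_rotOrbit_iff.2 ⟨t, congrArg Subtype.val h⟩))
    ⟨Quotient.ind₂ fun _ _ h => Quotient.sound (by
        obtain ⟨t, ht⟩ := rotOrbit_eq_rotOrbit_iff.1 (congrArg Subtype.val h)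
        exact ⟨t, Subtype.ext ht⟩),
      fun ⟨_, f, hf, hS⟩ => ⟨⟦⟨f, hf⟩⟧, Subtype.ext hS.symm⟩⟩

instance (k : ℕ) : Finite (necklaces n k) := .of_equiv _ (necklacesEquivQuotient k).symm

theorem mul_card_necklaces (hn : n.Prime) (k : ℕ) :
    n * Nat.card (necklaces n k) = #(codes n k) + (n - 1) * if n ∣ k then 1 else 0 := by
  classical
  have : Fintype {f : ZMod n → ℕ // IsCode n k f} := .ofFinite _
  have burnside := AddAction.sum_card_fixedBy_eq_card_orbits_mul_card_addGroup (ZMod n)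
    {f : ZMod n → ℕ // IsCode n k f}
  simp only [← Nat.card_eq_fintype_card, Nat.card_zmod] at burnside
  rw [Nat.card_congr (necklacesEquivQuotient k), mul_comm, AddAction.orbitRel.Quotient,
    ← burnside, Fintype.sum_eq_apply_add_card_sub_one_nsmul 0 fun t ht => card_fixedBy_code hn k ht,
    AddAction.fixedBy_zero_eq_univ, Nat.card_univ, card_code, ZMod.card, smul_eq_mul]

section GeneratingFunction

variable {K : Type*} [Field K] {ψ : AddChar (ZMod n) K}

open Polynomial in
theorem prod_one_sub_C_mul_X_eq (hψ : Function.Injective ψ) :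
    ∏ j, (1 - C (ψ j) * X) = (1 - X ^ n : K[X]) := by
  classical
  have hψ0 (j : ZMod n) : ψ j ≠ 0 := (ψ.val_isUnit j).ne_zero
  have hpow (j : ZMod n) : ψ j ^ n = 1 := by
    rw [← ψ.map_nsmul_eq_pow, nsmul_eq_mul, ZMod.natCast_self, zero_mul, ψ.map_zero_eq_one]
  -- Both sides have degree at most `n`, take the value `1` at `0`, and vanish at every `ψ j`.
  let s := insert 0 (univ.map ⟨ψ, hψ⟩)
  have hs : #s = n + 1 := by
    rw [card_insert_of_notMem (by simpa using hψ0), card_map, card_univ, ZMod.card]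
  have hdeg : (∏ j, (1 - C (ψ j) * X) - (1 - X ^ n : K[X])).natDegree ≤ n := by
    refine (natDegree_sub_le _ _).trans (max_le ?_ (by compute_degree))
    refine (natDegree_prod_le _ _).trans ((sum_le_card_nsmul univ _ 1 fun j _ => ?_).trans_eq ?_)
    · change (1 - C (ψ j) * X).natDegree ≤ 1
      compute_degree
    · rw [card_univ, ZMod.card, smul_eq_mul, mul_one]
  refine eq_of_degree_sub_lt_of_eval_finset_eq s ?_ fun x hx => ?_
  · rw [hs]
    exact (degree_le_of_natDegree_le hdeg).trans_lt (by exact_mod_cast n.lt_succ_self)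
  rcases mem_insert.1 hx with rfl | hx
  · simp [eval_prod, NeZero.ne n]
  · obtain ⟨i, -, rfl⟩ := mem_map.1 hx
    rw [eval_prod, prod_eq_zero (mem_univ (-i))]
    · simp [hpow]
    · simp [← AddChar.map_add_eq_mul]

open PowerSeries in
theorem prod_rescale_mk_one_eq_expand (hψ : Function.Injective ψ) :
    ∏ j, rescale (ψ j) (mk 1) = expand n (NeZero.ne n) (mk 1 : K⟦X⟧) := by
  have hgeom : (mk 1 : K⟦X⟧) * (1 - X) = 1 := mk_one_mul_one_sub_eq_one K
  have hprod : ∏ j, (1 - C (ψ j) * X) = (1 - X ^ n : K⟦X⟧) := by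
    simpa using congrArg (Polynomial.coeToPowerSeries.ringHom (R := K))
      (prod_one_sub_C_mul_X_eq hψ)
  refine left_inv_eq_right_inv (a := (1 - X ^ n : K⟦X⟧)) ?_ ?_
  · rw [← hprod, ← prod_mul_distrib]
    refine prod_eq_one fun j _ => ?_
    rw [← rescale_X, ← map_one (rescale (ψ j)), ← map_sub, ← map_mul, hgeom, map_one]
  · rw [← expand_X n (NeZero.ne n), ← map_one (expand n (NeZero.ne n)), ← map_sub, ← map_mul,
      mul_comm, hgeom, map_one]

theorem sum_codes_addChar_wsum (hψ : Function.Injective ψ) (k : ℕ) :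
    ∑ f ∈ codes n k, ψ (wsum n f) = if n ∣ k then 1 else 0 := by
  have hprod (f : ZMod n → ℕ) : ψ (wsum n f) = ∏ j, ψ j ^ f j :=
    calc ψ (wsum n f) = ∏ j, ψ (j * f j) := map_prod ψ.toMonoidHom _ univ
      _ = ∏ j, ψ j ^ f j := by
        simp_rw [mul_comm _ ((_ : ℕ) : ZMod n), ← nsmul_eq_mul, ψ.map_nsmul_eq_pow]
  calc ∑ f ∈ codes n k, ψ (wsum n f)
      = PowerSeries.coeff k (∏ j, PowerSeries.rescale (ψ j) (PowerSeries.mk 1)) := by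
        simp [codes, hprod, PowerSeries.coeff_prod]
    _ = if n ∣ k then 1 else 0 := by
        rw [prod_rescale_mk_one_eq_expand hψ, PowerSeries.coeff_expand]
        simp

end GeneratingFunction

theorem mul_card_wsum_eq_zero (hn : n.Prime) (k : ℕ) :
    n * Nat.card {f : ZMod n → ℕ // IsCode n k f ∧ wsum n f = 0} =
      #(codes n k) + (n - 1) * if n ∣ k then 1 else 0 := by
  have : Fact n.Prime := ⟨hn⟩
  have hζ := Complex.isPrimitiveRoot_exp n (NeZero.ne n)
  set ψ := AddChar.zmodChar n hζ.pow_eq_one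
  have hψ : ψ.IsPrimitive := AddChar.zmodChar_primitive_of_primitive_root n hζ
  have hinj (t : ZMod n) (ht : t ≠ 0) : Function.Injective (ψ.mulShift t) :=
    AddChar.injective_iff.2 fun x hx => by
      rw [AddChar.mulShift_apply, hψ.zmod_char_eq_one_iff n] at hx
      exact (mul_eq_zero.1 hx).resolve_left ht
  have hcard : Nat.card {f : ZMod n → ℕ // IsCode n k f ∧ wsum n f = 0} =
      #{f ∈ codes n k | wsum n f = 0} := by
    rw [← Nat.card_eq_finsetCard]
    exact Nat.card_congr (Equiv.subtypeEquivRight fun _ => by simp [mem_codes])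
  suffices h : (n * #{f ∈ codes n k | wsum n f = 0} : ℂ) =
      #(codes n k) + (n - 1 : ℕ) * if n ∣ k then 1 else 0 by
    rw [hcard]
    exact_mod_cast h
  calc (n * #{f ∈ codes n k | wsum n f = 0} : ℂ)
      = ∑ f ∈ codes n k, ∑ t, ψ (t * wsum n f) := by
        simp_rw [AddChar.sum_mulShift _ hψ, Nat.cast_ite, Nat.cast_zero]
        rw [← sum_filter, sum_const, ZMod.card, nsmul_eq_mul, mul_comm]
    _ = ∑ t, ∑ f ∈ codes n k, ψ.mulShift t (wsum n f) := sum_comm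
    _ = _ := by
        rw [Fintype.sum_eq_apply_add_card_sub_one_nsmul 0
          fun t ht => sum_codes_addChar_wsum (hinj t ht) k]
        simp

theorem odd_prime_necklace_bijection_general (n k : ℕ) [NeZero n] (hprime : n.Prime) :
    Nonempty
      (necklaces n k ≃ {f : ZMod n → ℕ // IsCode n k f ∧ wsum n f = 0}) := by
  refine Finite.card_eq.1 (Nat.eq_of_mul_eq_mul_left hprime.pos ?_)
  rw [mul_card_necklaces hprime, mul_card_wsum_eq_zero hprime]

/-- If `n` is an odd prime, there is a bijection between `N_{n,k}` and `F_{n,k,0}`,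
the `(n,k)`-codes with weighted sum `0`. -/
theorem odd_prime_necklace_bijection (n k : ℕ) [NeZero n] (hk : 0 < k)
    (hprime : n.Prime) (hodd : Odd n) :
    Nonempty
      (necklaces n k ≃ {f : ZMod n → ℕ // IsCode n k f ∧ wsum n f = 0}) :=
  odd_prime_necklace_bijection_general n k hprime
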